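/- arXiv:2402.08522 — 4 statements merged into one kernel-verified Lean document; each statement's English description precedes it below -/
import Mathlib

section
/- Let R > 0 and p ∈ (0, 1/2]. Let σ, σ̄ : ℕ → ℝ be sequences with σ_i ≥ 0, σ̄_i ≥ 0 for all i and σ_0 + σ̄_0 > 0; let P : ℕ → ℝ satisfy p ≤ P_i ≤ 1 − p for all i; and let r : ℕ → ℝ satisfy 0 < r_i < R for all i (allocations independent of m). Define A_m = ∑_{i<m} ( σ_i/√(r_i + (m−1)·P_i·R) + σ̄_i/√((R − r_i) + (m−1)·(1−P_i)·R) ) and U_m = ∑_{i<m} ( σ_i/√(m·P_i·R) + σ̄_i/√(m·(1−P_i)·R) ). Then A_m / U_m tends to 1 as m → ∞; i.e., the a-posteriori Neyman average DP error is asymptotically equivalent to the a-posteriori uniform average DP error. -/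
/-!
Each a-posteriori allocation `r_i + (m - 1) P_i R` of agent `i` lies between `(m - 1) P_i R`
and `m P_i R + R ≤ m P_i R + P_i R / p`, i.e. between `(1 - 1/m)` and `(1 + 1/(m p))` times
the uniform allocation `m P_i R`, uniformly in `i` (likewise for the complementary group).
So every term of `A_m` is squeezed between `U_m`'s term times `(1 + 1/(m p))^(-1/2)` and
times `(1 - 1/m)^(-1/2)`, the ratio `A_m / U_m` is squeezed between these factors, and both
tend to `1`.
-/

open Filter Finset Topology

/-- The paper's `ε(i)`, for group standard deviations `σ, σ'` and allocations `N, N'`. -/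
noncomputable def dpError (σ σ' N N' : ℝ) : ℝ := σ / √N + σ' / √N'

lemma dpError_nonneg {σ σ' : ℝ} (hσ : 0 ≤ σ) (hσ' : 0 ≤ σ') (N N' : ℝ) :
    0 ≤ dpError σ σ' N N' := by
  unfold dpError; positivity

lemma dpError_pos {σ σ' N N' : ℝ} (hσ : 0 ≤ σ) (hσ' : 0 ≤ σ') (hσσ' : 0 < σ + σ')
    (hN : 0 < N) (hN' : 0 < N') : 0 < dpError σ σ' N N' := by
  unfold dpError
  rcases hσ.eq_or_lt with rfl | hσ
  · have : 0 < σ' := by linarith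
    positivity
  · positivity

lemma inv_sqrt_mul_div_sqrt_le {a x d C : ℝ} (ha : 0 ≤ a) (hx : 0 ≤ x) (hd : 0 < d)
    (h : d ≤ C * x) : (√C)⁻¹ * (a / √x) ≤ a / √d := by
  rw [inv_mul_eq_div, div_div, ← Real.sqrt_mul hx]
  exact div_le_div_of_nonneg_left ha (Real.sqrt_pos.2 hd)
    (Real.sqrt_le_sqrt (h.trans_eq (mul_comm C x)))

lemma div_sqrt_le_inv_sqrt_mul {a x d c : ℝ} (ha : 0 ≤ a) (hc : 0 < c) (hx : 0 < x)
    (h : c * x ≤ d) : a / √d ≤ (√c)⁻¹ * (a / √x) := by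
  rw [inv_mul_eq_div, div_div, ← Real.sqrt_mul hx.le]
  exact div_le_div_of_nonneg_left ha (Real.sqrt_pos.2 (by positivity))
    (Real.sqrt_le_sqrt ((mul_comm x c).trans_le h))

lemma inv_sqrt_mul_dpError_le {σ σ' N N' M M' C : ℝ} (hσ : 0 ≤ σ) (hσ' : 0 ≤ σ')
    (hN : 0 ≤ N) (hN' : 0 ≤ N') (hM : 0 < M) (hM' : 0 < M')
    (h : M ≤ C * N) (h' : M' ≤ C * N') :
    (√C)⁻¹ * dpError σ σ' N N' ≤ dpError σ σ' M M' := by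
  rw [dpError, dpError, mul_add]
  exact add_le_add (inv_sqrt_mul_div_sqrt_le hσ hN hM h)
    (inv_sqrt_mul_div_sqrt_le hσ' hN' hM' h')

lemma dpError_le_inv_sqrt_mul {σ σ' N N' M M' c : ℝ} (hσ : 0 ≤ σ) (hσ' : 0 ≤ σ')
    (hc : 0 < c) (hN : 0 < N) (hN' : 0 < N') (h : c * N ≤ M) (h' : c * N' ≤ M') :
    dpError σ σ' M M' ≤ (√c)⁻¹ * dpError σ σ' N N' := by
  rw [dpError, dpError, mul_add]
  exact add_le_add (div_sqrt_le_inv_sqrt_mul hσ hc hN h)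
    (div_sqrt_le_inv_sqrt_mul hσ' hc hN' h')

lemma aposteriori_allocation_bounds {R p P r m : ℝ} (hm : 0 < m) (hp : 0 < p) (hpP : p ≤ P)
    (hR : 0 ≤ R) (hr : 0 ≤ r) (hrR : r ≤ R) :
    (1 + -1 / m) * (m * P * R) ≤ r + (m - 1) * P * R ∧
      r + (m - 1) * P * R ≤ (1 + p⁻¹ / m) * (m * P * R) := by
  have hlow : (1 + -1 / m) * (m * P * R) = (m - 1) * P * R := by
    field_simp; ring
  have hup : (1 + p⁻¹ / m) * (m * P * R) = (m - 1) * P * R + (P * R / p + P * R) := by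
    field_simp; ring
  have hRP : R ≤ P * R / p := by
    rw [le_div_iff₀ hp]; nlinarith
  have hPR : 0 ≤ P * R := by nlinarith
  constructor <;> linarith

lemma aposteriori_dpError_bounds {R p P r σ σ' m : ℝ} (hR : 0 < R) (hp : 0 < p)
    (hP : p ≤ P ∧ P ≤ 1 - p) (hr : 0 < r ∧ r < R) (hσ : 0 ≤ σ) (hσ' : 0 ≤ σ')
    (hm : 2 ≤ m) :
    let U := dpError σ σ' (m * P * R) (m * (1 - P) * R)
    let A := dpError σ σ' (r + (m - 1) * P * R) ((R - r) + (m - 1) * (1 - P) * R)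
    (√(1 + p⁻¹ / m))⁻¹ * U ≤ A ∧ A ≤ (√(1 + -1 / m))⁻¹ * U := by
  obtain ⟨hpP, hPp⟩ := hP
  obtain ⟨hr0, hrR⟩ := hr
  have hP0 : 0 < P := hp.trans_le hpP
  have hP1 : 0 < 1 - P := hp.trans_le (by linarith)
  have hm0 : 0 < m := by linarith
  have hc : 0 < 1 + -1 / m := by
    rw [neg_div, ← sub_eq_add_neg, sub_pos, div_lt_one hm0]; linarith
  obtain ⟨hlo, hhi⟩ := aposteriori_allocation_bounds hm0 hp hpP hR.le hr0.le hrR.le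
  obtain ⟨hlo', hhi'⟩ := aposteriori_allocation_bounds (P := 1 - P) (r := R - r) hm0 hp
    (by linarith) hR.le (by linarith) (by linarith)
  have hm1 : 0 < m - 1 := by linarith
  have hM : 0 < r + (m - 1) * P * R := add_pos hr0 (mul_pos (mul_pos hm1 hP0) hR)
  have hM' : 0 < (R - r) + (m - 1) * (1 - P) * R :=
    add_pos (sub_pos.2 hrR) (mul_pos (mul_pos hm1 hP1) hR)
  exact ⟨inv_sqrt_mul_dpError_le hσ hσ' (by positivity) (by positivity) hM hM' hhi hhi',
    dpError_le_inv_sqrt_mul hσ hσ' hc (by positivity) (by positivity) hlo hlo'⟩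

lemma le_sum_div_sum_of_forall_mul_le {ι : Type*} {s : Finset ι} {a u : ι → ℝ} {l : ℝ}
    (hu : 0 < ∑ i ∈ s, u i) (h : ∀ i ∈ s, l * u i ≤ a i) :
    l ≤ (∑ i ∈ s, a i) / ∑ i ∈ s, u i := by
  rw [le_div_iff₀ hu, mul_sum]
  exact sum_le_sum h

lemma sum_div_sum_le_of_forall_le_mul {ι : Type*} {s : Finset ι} {a u : ι → ℝ} {h : ℝ}
    (hu : 0 < ∑ i ∈ s, u i) (hau : ∀ i ∈ s, a i ≤ h * u i) :
    (∑ i ∈ s, a i) / ∑ i ∈ s, u i ≤ h := by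
  rw [div_le_iff₀ hu, mul_sum]
  exact sum_le_sum hau

lemma tendsto_inv_sqrt_one_add_div_natCast (c : ℝ) :
    Tendsto (fun n : ℕ => (√(1 + c / n))⁻¹) atTop (𝓝 1) := by
  have h := (((tendsto_const_div_atTop_nhds_zero_nat c).const_add 1).sqrt).inv₀
    (by norm_num : √(1 + 0 : ℝ) ≠ 0)
  simpa using h

theorem aposteriori_neyman_asympt_uniform_general
    (R : ℝ) (hR : 0 < R) (p : ℝ) (hp : 0 < p)
    (σ σ' P r : ℕ → ℝ)
    (hσ : ∀ i, 0 ≤ σ i) (hσ' : ∀ i, 0 ≤ σ' i)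
    (h0 : 0 < σ 0 + σ' 0)
    (hP : ∀ i, p ≤ P i ∧ P i ≤ 1 - p)
    (hr : ∀ i, 0 < r i ∧ r i < R) :
    Filter.Tendsto
      (fun m : ℕ =>
        (∑ i ∈ Finset.range m,
            (σ i / Real.sqrt (r i + ((m : ℝ) - 1) * P i * R)
              + σ' i / Real.sqrt ((R - r i) + ((m : ℝ) - 1) * (1 - P i) * R)))
        / (∑ i ∈ Finset.range m,
            (σ i / Real.sqrt ((m : ℝ) * P i * R)
              + σ' i / Real.sqrt ((m : ℝ) * (1 - P i) * R))))
      Filter.atTop (nhds 1) := by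
  have hU : ∀ m : ℕ, 2 ≤ m →
      0 < ∑ i ∈ range m, dpError (σ i) (σ' i) (m * P i * R) (m * (1 - P i) * R) := by
    intro m hm
    have hm0 : (0 : ℝ) < m := Nat.cast_pos.2 (by omega)
    have hP0 : 0 < P 0 := hp.trans_le (hP 0).1
    have hP1 : 0 < 1 - P 0 := hp.trans_le (by linarith [(hP 0).2])
    exact sum_pos' (fun i _ => dpError_nonneg (hσ i) (hσ' i) _ _)
      ⟨0, mem_range.2 (by omega),
        dpError_pos (hσ 0) (hσ' 0) h0 (by positivity) (by positivity)⟩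
  have hbounds (m : ℕ) (hm : 2 ≤ m) (i : ℕ) :=
    aposteriori_dpError_bounds (m := m) hR hp (hP i) (hr i) (hσ i) (hσ' i) (by exact_mod_cast hm)
  refine tendsto_of_tendsto_of_tendsto_of_le_of_le' (tendsto_inv_sqrt_one_add_div_natCast p⁻¹)
    (tendsto_inv_sqrt_one_add_div_natCast (-1)) ?_ ?_ <;>
    filter_upwards [eventually_ge_atTop 2] with m hm
  · exact le_sum_div_sum_of_forall_mul_le (hU m hm) fun i _ => (hbounds m hm i).1
  · exact sum_div_sum_le_of_forall_le_mul (hU m hm) fun i _ => (hbounds m hm i).2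

/-- The a-posteriori Neyman average DP error is asymptotically equivalent to
the a-posteriori uniform average DP error as the number of agents grows. -/
theorem aposteriori_neyman_asympt_uniform
    (R : ℝ) (hR : 0 < R) (p : ℝ) (hp : 0 < p) (hp' : p ≤ 1 / 2)
    (σ σ' P r : ℕ → ℝ)
    (hσ : ∀ i, 0 ≤ σ i) (hσ' : ∀ i, 0 ≤ σ' i)
    (h0 : 0 < σ 0 + σ' 0)
    (hP : ∀ i, p ≤ P i ∧ P i ≤ 1 - p)
    (hr : ∀ i, 0 < r i ∧ r i < R) :
    Filter.Tendsto
      (fun m : ℕ =>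
        (∑ i ∈ Finset.range m,
            (σ i / Real.sqrt (r i + ((m : ℝ) - 1) * P i * R)
              + σ' i / Real.sqrt ((R - r i) + ((m : ℝ) - 1) * (1 - P i) * R)))
        / (∑ i ∈ Finset.range m,
            (σ i / Real.sqrt ((m : ℝ) * P i * R)
              + σ' i / Real.sqrt ((m : ℝ) * (1 - P i) * R))))
      Filter.atTop (nhds 1) :=
  aposteriori_neyman_asympt_uniform_general R hR p hp σ σ' P r hσ hσ' h0 hP hr
end

section
/- Let R > 0 and p ∈ (0, 1/2]. Let σ, σ̄ : ℕ → ℝ be sequences with σ_i ≥ 0, σ̄_i ≥ 0 for all i and σ_0 + σ̄_0 > 0, and let P : ℕ → ℝ satisfy p ≤ P_i ≤ 1 − p for all i. Define S_m = ∑_{i<m} ( σ_i/√(R/2 + (m−1)·P_i·R) + σ̄_i/√(R/2 + (m−1)·(1−P_i)·R) ) and U_m = ∑_{i<m} ( σ_i/√(m·P_i·R) + σ̄_i/√(m·(1−P_i)·R) ). Then S_m / U_m tends to 1 as m → ∞; i.e., the stratified a-posteriori average DP error is asymptotically equivalent to the uniform a-posteriori average DP error. -/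
/-!
Write `B = m Q R` for the uniform allocation of a group of proportion `Q ≥ p`. The stratified
allocation is `A = R/2 + (m - 1) Q R = B + R (1/2 - Q)`, so `|A - B| ≤ R/2 ≤ B t` with
`t = 1 / (2 p m)`. Hence every summand of the stratified error lies between
`(1 + t)^{-1/2}` and `(1 - t)^{-1/2}` times the matching uniform summand, and so does the
ratio of the two sums. Both factors tend to `1` as `m → ∞`.
-/

open Filter Topology

lemma le_sum_div_sum {ι : Type*} (s : Finset ι) {a b : ι → ℝ} {c : ℝ}
    (hb : 0 < ∑ i ∈ s, b i) (h : ∀ i ∈ s, b i * c ≤ a i) :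
    c ≤ (∑ i ∈ s, a i) / ∑ i ∈ s, b i := by
  rw [le_div_iff₀ hb, Finset.mul_sum]
  exact Finset.sum_le_sum fun i hi => (mul_comm c (b i)).trans_le (h i hi)

lemma sum_div_sum_le {ι : Type*} (s : Finset ι) {a b : ι → ℝ} {d : ℝ}
    (hb : 0 < ∑ i ∈ s, b i) (h : ∀ i ∈ s, a i ≤ b i * d) :
    (∑ i ∈ s, a i) / ∑ i ∈ s, b i ≤ d := by
  rw [div_le_iff₀ hb, mul_comm d, Finset.sum_mul]
  exact Finset.sum_le_sum h

lemma div_sqrt_bounds_of_abs_sub_le {s A B t : ℝ} (hs : 0 ≤ s) (hB : 0 < B) (ht : t < 1)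
    (h : |A - B| ≤ B * t) :
    s / √B * (√(1 + t))⁻¹ ≤ s / √A ∧ s / √A ≤ s / √B * (√(1 - t))⁻¹ := by
  obtain ⟨hlo, hhi⟩ := abs_sub_le_iff.mp h
  have hA : 0 < A := by nlinarith
  have hsplit x : s / √B * (√x)⁻¹ = s / √(B * x) := by
    rw [Real.sqrt_mul hB.le, ← div_div, div_eq_mul_inv (s / √B)]
  rw [hsplit, hsplit]
  exact ⟨div_le_div_of_nonneg_left hs (Real.sqrt_pos.mpr hA) (Real.sqrt_le_sqrt (by linarith)),
    div_le_div_of_nonneg_left hs (Real.sqrt_pos.mpr (by nlinarith))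
      (Real.sqrt_le_sqrt (by linarith))⟩

lemma abs_stratified_sub_uniform_le {R p Q m : ℝ} (hR : 0 < R) (hp : 0 < p) (hpQ : p ≤ Q)
    (hQ : Q ≤ 1) (hm : 0 < m) :
    |R / 2 + (m - 1) * Q * R - m * Q * R| ≤ m * Q * R * ((2 * p)⁻¹ / m) := by
  have hrhs : m * Q * R * ((2 * p)⁻¹ / m) = R * (Q / (2 * p)) := by field_simp
  have hQp : 1 / 2 ≤ Q / (2 * p) := by rw [le_div_iff₀ (by positivity)]; linarith
  rw [hrhs, show R / 2 + (m - 1) * Q * R - m * Q * R = R * (1 / 2 - Q) by ring, abs_mul,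
    abs_of_pos hR]
  exact mul_le_mul_of_nonneg_left ((abs_sub_le_iff.mpr ⟨by linarith, by linarith⟩).trans hQp)
    hR.le

lemma stratified_error_bounds {R p Q s m : ℝ} (hR : 0 < R) (hp : 0 < p) (hpQ : p ≤ Q)
    (hQ : Q ≤ 1) (hs : 0 ≤ s) (hm : 0 < m) (ht : (2 * p)⁻¹ / m < 1) :
    s / √(m * Q * R) * (√(1 + (2 * p)⁻¹ / m))⁻¹ ≤ s / √(R / 2 + (m - 1) * Q * R) ∧
      s / √(R / 2 + (m - 1) * Q * R) ≤ s / √(m * Q * R) * (√(1 - (2 * p)⁻¹ / m))⁻¹ :=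
  div_sqrt_bounds_of_abs_sub_le hs (by have := hp.trans_le hpQ; positivity) ht
    (abs_stratified_sub_uniform_le hR hp hpQ hQ hm)

lemma agent_stratified_error_bounds {R p Q s s' m : ℝ} (hR : 0 < R) (hp : 0 < p)
    (hQ : p ≤ Q ∧ Q ≤ 1 - p) (hs : 0 ≤ s) (hs' : 0 ≤ s') (hm : 0 < m)
    (ht : (2 * p)⁻¹ / m < 1) :
    (s / √(m * Q * R) + s' / √(m * (1 - Q) * R)) * (√(1 + (2 * p)⁻¹ / m))⁻¹ ≤
        s / √(R / 2 + (m - 1) * Q * R) + s' / √(R / 2 + (m - 1) * (1 - Q) * R) ∧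
      s / √(R / 2 + (m - 1) * Q * R) + s' / √(R / 2 + (m - 1) * (1 - Q) * R) ≤
        (s / √(m * Q * R) + s' / √(m * (1 - Q) * R)) * (√(1 - (2 * p)⁻¹ / m))⁻¹ := by
  obtain ⟨h₁, h₂⟩ := stratified_error_bounds hR hp hQ.1 (by linarith) hs hm ht
  obtain ⟨h₁', h₂'⟩ :=
    stratified_error_bounds hR hp (by linarith) (by linarith) hs' hm ht (Q := 1 - Q)
  rw [add_mul, add_mul]
  exact ⟨add_le_add h₁ h₁', add_le_add h₂ h₂'⟩

lemma sum_div_sqrt_add_div_sqrt_pos {σ σ' x y : ℕ → ℝ} {m : ℕ} (hm : 0 < m)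
    (hσ : ∀ i, 0 ≤ σ i) (hσ' : ∀ i, 0 ≤ σ' i) (h0 : 0 < σ 0 + σ' 0)
    (hx : ∀ i, 0 < x i) (hy : ∀ i, 0 < y i) :
    0 < ∑ i ∈ Finset.range m, (σ i / √(x i) + σ' i / √(y i)) := by
  refine Finset.sum_pos' (fun i _ => add_nonneg (div_nonneg (hσ i) (Real.sqrt_nonneg _))
    (div_nonneg (hσ' i) (Real.sqrt_nonneg _))) ⟨0, Finset.mem_range.mpr hm, ?_⟩
  have := hx 0
  have := hy 0
  rcases (hσ 0).lt_or_eq with hσ0 | hσ0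
  · exact add_pos_of_pos_of_nonneg (by positivity) (div_nonneg (hσ' 0) (Real.sqrt_nonneg _))
  · have : 0 < σ' 0 := by linarith
    rw [← hσ0, zero_div, zero_add]
    positivity

lemma tendsto_inv_sqrt_of_tendsto_one {α : Type*} {l : Filter α} {f : α → ℝ}
    (hf : Tendsto f l (𝓝 1)) : Tendsto (fun x => (√(f x))⁻¹) l (𝓝 1) := by
  simpa using hf.sqrt.inv₀ (by simp)

theorem stratified_aposteriori_asympt_uniform_general
    (R : ℝ) (hR : 0 < R) (p : ℝ) (hp : 0 < p)
    (σ σ' P : ℕ → ℝ)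
    (hσ : ∀ i, 0 ≤ σ i) (hσ' : ∀ i, 0 ≤ σ' i)
    (h0 : 0 < σ 0 + σ' 0)
    (hP : ∀ i, p ≤ P i ∧ P i ≤ 1 - p) :
    Filter.Tendsto
      (fun m : ℕ =>
        (∑ i ∈ Finset.range m,
            (σ i / Real.sqrt (R / 2 + ((m : ℝ) - 1) * P i * R)
              + σ' i / Real.sqrt (R / 2 + ((m : ℝ) - 1) * (1 - P i) * R)))
        / (∑ i ∈ Finset.range m,
            (σ i / Real.sqrt ((m : ℝ) * P i * R)
              + σ' i / Real.sqrt ((m : ℝ) * (1 - P i) * R))))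
      Filter.atTop (nhds 1) := by
  have ht : Tendsto (fun m : ℕ => (2 * p)⁻¹ / (m : ℝ)) atTop (𝓝 0) :=
    tendsto_const_div_atTop_nhds_zero_nat _
  have hPpos i : 0 < P i := hp.trans_le (hP i).1
  have hPpos' i : 0 < 1 - P i := by linarith [hP i]
  refine tendsto_of_tendsto_of_tendsto_of_le_of_le'
    (tendsto_inv_sqrt_of_tendsto_one (by simpa only [add_zero] using tendsto_const_nhds.add ht))
    (tendsto_inv_sqrt_of_tendsto_one (by simpa only [sub_zero] using tendsto_const_nhds.sub ht))
    ?_ ?_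
  all_goals
    filter_upwards [eventually_gt_atTop 0, ht.eventually (gt_mem_nhds one_pos)] with m hm hlt
    have hm' : (0 : ℝ) < m := Nat.cast_pos.mpr hm
    have hU := sum_div_sqrt_add_div_sqrt_pos hm hσ hσ' h0
      (fun i => by have := hPpos i; positivity : ∀ i, 0 < (m : ℝ) * P i * R)
      (fun i => by have := hPpos' i; positivity : ∀ i, 0 < (m : ℝ) * (1 - P i) * R)
  · exact le_sum_div_sum _ hU fun i _ =>
      (agent_stratified_error_bounds hR hp (hP i) (hσ i) (hσ' i) hm' hlt).1
  · exact sum_div_sum_le _ hU fun i _ =>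
      (agent_stratified_error_bounds hR hp (hP i) (hσ i) (hσ' i) hm' hlt).2

/-- The stratified a-posteriori average DP error is asymptotically equivalent
to the uniform a-posteriori average DP error as the number of agents grows. -/
theorem stratified_aposteriori_asympt_uniform
    (R : ℝ) (hR : 0 < R) (p : ℝ) (hp : 0 < p) (hp' : p ≤ 1 / 2)
    (σ σ' P : ℕ → ℝ)
    (hσ : ∀ i, 0 ≤ σ i) (hσ' : ∀ i, 0 ≤ σ' i)
    (h0 : 0 < σ 0 + σ' 0)
    (hP : ∀ i, p ≤ P i ∧ P i ≤ 1 - p) :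
    Filter.Tendsto
      (fun m : ℕ =>
        (∑ i ∈ Finset.range m,
            (σ i / Real.sqrt (R / 2 + ((m : ℝ) - 1) * P i * R)
              + σ' i / Real.sqrt (R / 2 + ((m : ℝ) - 1) * (1 - P i) * R)))
        / (∑ i ∈ Finset.range m,
            (σ i / Real.sqrt ((m : ℝ) * P i * R)
              + σ' i / Real.sqrt ((m : ℝ) * (1 - P i) * R))))
      Filter.atTop (nhds 1) :=
  stratified_aposteriori_asympt_uniform_general R hR p hp σ σ' P hσ hσ' h0 hP
end

section
/- Let m ≥ 1 be a natural number, R > 0, and for each i ∈ Fin m let σ_i ≥ 0. If the black box is fair on every attribute, i.e. the two per-group standard deviations of each agent are equal (σ̄_i = σ_i), then stratified sampling achieves the Neyman optimum without collaboration: (1/m) ∑_{i<m} 2·σ_i/√(R/2) = (1/m) ∑_{i<m} inf_{0<r<R} ( σ_i/√r + σ_i/√(R−r) ). -/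
lemma neyman_lower (R : ℝ) (hR : 0 < R) (s : ℝ) (hs : 0 ≤ s) (r : ℝ)
    (hr : r ∈ Set.Ioo (0 : ℝ) R) :
    s / Real.sqrt (R / 2) + s / Real.sqrt (R / 2)
      ≤ s / Real.sqrt r + s / Real.sqrt (R - r) := by
  obtain ⟨hr0, hrR⟩ := hr
  have hb0 : 0 < R - r := by linarith
  set a := Real.sqrt r with ha
  set b := Real.sqrt (R - r) with hb
  set c := Real.sqrt (R / 2) with hc
  have hap : 0 < a := Real.sqrt_pos.2 hr0
  have hbp : 0 < b := Real.sqrt_pos.2 hb0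
  have hcp : 0 < c := Real.sqrt_pos.2 (by linarith)
  have ha2 : a ^ 2 = r := Real.sq_sqrt hr0.le
  have hb2 : b ^ 2 = R - r := Real.sq_sqrt hb0.le
  have hc2 : c ^ 2 = R / 2 := Real.sq_sqrt (by linarith)
  have hab : a * b ≤ c ^ 2 := by nlinarith [sq_nonneg (a - b)]
  have key : 2 * (a * b) ≤ c * (a + b) := by
    nlinarith [sq_nonneg (c * (a + b) - 2 * a * b), sq_nonneg (a - b),
      mul_pos hap hbp, sq_nonneg (a + b), mul_pos (mul_pos hap hbp) hcp]
  have h1 : s / c + s / c = s * (2 / c) := by ring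
  have h2 : s / a + s / b = s * (1 / a + 1 / b) := by ring
  rw [h1, h2]
  apply mul_le_mul_of_nonneg_left _ hs
  rw [div_add_div _ _ (ne_of_gt hap) (ne_of_gt hbp), div_le_div_iff₀ hcp (mul_pos hap hbp)]
  nlinarith [key]

/-- When the black box is fair (equal per-group standard deviations),
stratified sampling achieves the Neyman optimum without collaboration. -/
theorem stratified_eq_neyman_when_fair
    (m : ℕ) (hm : 1 ≤ m) (R : ℝ) (hR : 0 < R)
    (σ σ' : Fin m → ℝ)
    (hσ : ∀ i, 0 ≤ σ i)
    (hfair : ∀ i, σ' i = σ i) :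
    (1 / (m : ℝ)) * ∑ i, (σ i / Real.sqrt (R / 2) + σ' i / Real.sqrt (R / 2))
      = (1 / (m : ℝ)) * ∑ i, sInf
          ((fun r => σ i / Real.sqrt r + σ' i / Real.sqrt (R - r)) ''
            Set.Ioo (0 : ℝ) R) := by
  congr 1
  apply Finset.sum_congr rfl
  intro i _
  rw [hfair i]
  symm
  have hmem : σ i / Real.sqrt (R / 2) + σ i / Real.sqrt (R / 2)
      ∈ (fun r => σ i / Real.sqrt r + σ i / Real.sqrt (R - r)) '' Set.Ioo (0 : ℝ) R := by
    refine ⟨R / 2, ⟨by linarith, by linarith⟩, ?_⟩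
    simp only []
    rw [show R - R / 2 = R / 2 by ring]
  have hlb : ∀ x ∈ (fun r => σ i / Real.sqrt r + σ i / Real.sqrt (R - r)) '' Set.Ioo (0 : ℝ) R,
      σ i / Real.sqrt (R / 2) + σ i / Real.sqrt (R / 2) ≤ x := by
    rintro x ⟨r, hr, rfl⟩
    exact neyman_lower R hR (σ i) (hσ i) r hr
  exact le_antisymm (csInf_le ⟨_, hlb⟩ hmem) (le_csInf ⟨_, hmem⟩ hlb)
end

section
/- Let m ≥ 2 be a natural number, R > 0, and for each i ∈ Fin m let σ_i ≥ 0, σ̄_i ≥ 0 and P_i ∈ (0,1). If there exists some i with σ_i > 0 or σ̄_i > 0, then stratified a-posteriori collaboration strictly decreases the average DP error compared to no collaboration: (1/m) ∑_{i<m} ( σ_i/√(R/2 + (m−1)·P_i·R) + σ̄_i/√(R/2 + (m−1)·(1−P_i)·R) ) < (1/m) ∑_{i<m} ( σ_i/√(R/2) + σ̄_i/√(R/2) ). -/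
private lemma div_sqrt_mono (s a b : ℝ) (hs : 0 ≤ s) (ha : 0 < a) (hab : a ≤ b) :
    s / Real.sqrt b ≤ s / Real.sqrt a :=
  div_le_div_of_nonneg_left hs (Real.sqrt_pos.mpr ha) (Real.sqrt_le_sqrt hab)

private lemma div_sqrt_strict (s a b : ℝ) (hs : 0 < s) (ha : 0 < a) (hab : a < b) :
    s / Real.sqrt b < s / Real.sqrt a :=
  div_lt_div_of_pos_left hs (Real.sqrt_pos.mpr ha) (Real.sqrt_lt_sqrt ha.le hab)

/-- Stratified a-posteriori collaboration strictly decreases the average DP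
error compared to no collaboration, whenever at least one estimation problem
has nonzero variance. -/
theorem stratified_aposteriori_lt_nocollab
    (m : ℕ) (hm : 2 ≤ m) (R : ℝ) (hR : 0 < R)
    (σ σ' P : Fin m → ℝ)
    (hσ : ∀ i, 0 ≤ σ i) (hσ' : ∀ i, 0 ≤ σ' i)
    (hP : ∀ i, 0 < P i ∧ P i < 1)
    (hpos : ∃ i, 0 < σ i ∨ 0 < σ' i) :
    (1 / (m : ℝ)) * ∑ i, (σ i / Real.sqrt (R / 2 + ((m : ℝ) - 1) * P i * R)
        + σ' i / Real.sqrt (R / 2 + ((m : ℝ) - 1) * (1 - P i) * R))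
      < (1 / (m : ℝ)) * ∑ i, (σ i / Real.sqrt (R / 2)
          + σ' i / Real.sqrt (R / 2)) := by
  have hm1 : (1 : ℝ) ≤ (m : ℝ) - 1 := by
    have : (2 : ℝ) ≤ (m : ℝ) := by exact_mod_cast hm
    linarith
  have hhalf : (0 : ℝ) < R / 2 := by linarith
  have hlt1 : ∀ i : Fin m, R / 2 < R / 2 + ((m : ℝ) - 1) * P i * R := by
    intro i
    have := mul_pos (mul_pos (by linarith : (0:ℝ) < (m:ℝ) - 1) (hP i).1) hR
    linarith
  have hlt2 : ∀ i : Fin m, R / 2 < R / 2 + ((m : ℝ) - 1) * (1 - P i) * R := by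
    intro i
    have := mul_pos (mul_pos (by linarith : (0:ℝ) < (m:ℝ) - 1)
      (by linarith [(hP i).2] : (0:ℝ) < 1 - P i)) hR
    linarith
  have hle : ∀ i : Fin m, i ∈ Finset.univ →
      σ i / Real.sqrt (R / 2 + ((m : ℝ) - 1) * P i * R)
        + σ' i / Real.sqrt (R / 2 + ((m : ℝ) - 1) * (1 - P i) * R)
      ≤ σ i / Real.sqrt (R / 2) + σ' i / Real.sqrt (R / 2) := by
    intro i _
    exact add_le_add
      (div_sqrt_mono _ _ _ (hσ i) hhalf (hlt1 i).le)
      (div_sqrt_mono _ _ _ (hσ' i) hhalf (hlt2 i).le)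
  obtain ⟨j, hj⟩ := hpos
  have hstrict : σ j / Real.sqrt (R / 2 + ((m : ℝ) - 1) * P j * R)
        + σ' j / Real.sqrt (R / 2 + ((m : ℝ) - 1) * (1 - P j) * R)
      < σ j / Real.sqrt (R / 2) + σ' j / Real.sqrt (R / 2) := by
    rcases hj with h | h
    · exact add_lt_add_of_lt_of_le (div_sqrt_strict _ _ _ h hhalf (hlt1 j))
        (div_sqrt_mono _ _ _ (hσ' j) hhalf (hlt2 j).le)
    · exact add_lt_add_of_le_of_lt (div_sqrt_mono _ _ _ (hσ j) hhalf (hlt1 j).le)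
        (div_sqrt_strict _ _ _ h hhalf (hlt2 j))
  have hsum := Finset.sum_lt_sum hle ⟨j, Finset.mem_univ j, hstrict⟩
  have hmpos : (0 : ℝ) < 1 / (m : ℝ) := by positivity
  exact mul_lt_mul_of_pos_left hsum hmpos
end
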